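/- Let c > 0 and let k, k₁, k₂, l, l₀, l₁, l₂ be real numbers with k₁ ≥ 0, k₂ ≥ 0, k₁ + k₂ ≤ k, 1 ≤ l₁ ≤ 2l/3, 1 ≤ l₂ ≤ 2l/3, 0 ≤ l₀ ≤ c·√k, l ≥ 2, and l ≤ 2k. Then 4c·k₁^{3/2}·log₂ l₁ + 4c·k₂^{3/2}·log₂ l₂ + l₀·l ≤ 4c·k^{3/2}·log₂ l. -/

import Mathlib

/-!
With `L = log₂ l` and `d = log₂ (3/2) ≥ 1/2`, both `log₂ lᵢ` lie in `[0, L - d]`, and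
`k ↦ k^{3/2}` is superadditive, so the first two terms are at most `4c k^{3/2} (L - d)`.
The remaining term is absorbed by the slack: `l₀ l ≤ c √k · 2k = 2c k^{3/2} ≤ 4c k^{3/2} d`.
-/

open Real

lemma rpow_add_rpow_le_of_add_le {p a b k : ℝ} (ha : 0 ≤ a) (hb : 0 ≤ b) (hab : a + b ≤ k)
    (hp : 1 ≤ p) : a ^ p + b ^ p ≤ k ^ p :=
  (add_rpow_le_rpow_add ha hb hp).trans (rpow_le_rpow (by positivity) hab (by linarith))

lemma rpow_three_halves_eq_mul_sqrt {x : ℝ} (hx : 0 ≤ x) : x ^ ((3 : ℝ) / 2) = x * √x := by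
  rw [rpow_div_two_eq_sqrt 3 hx, show (3 : ℝ) = (2 : ℕ) + 1 by norm_num,
    rpow_add_one' (sqrt_nonneg x) (by norm_num), rpow_natCast, sq_sqrt hx]

lemma mul_le_two_mul_rpow_three_halves {c k l₀ l : ℝ} (hc : 0 ≤ c) (hl : 0 ≤ l)
    (hl₀ : l₀ ≤ c * √k) (hlk : l ≤ 2 * k) : l₀ * l ≤ 2 * c * k ^ ((3 : ℝ) / 2) :=
  calc l₀ * l ≤ c * √k * (2 * k) := mul_le_mul hl₀ hlk hl (by positivity)
    _ = 2 * c * k ^ ((3 : ℝ) / 2) := by rw [rpow_three_halves_eq_mul_sqrt (by linarith)]; ring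

lemma half_le_logb_two_three_halves : 1 / 2 ≤ logb 2 (3 / 2) := by
  rw [le_logb_iff_rpow_le one_lt_two (by norm_num), ← sqrt_eq_rpow, sqrt_le_left (by norm_num)]
  norm_num

lemma logb_le_logb_sub_logb_of_mul_le {b x y z : ℝ} (hb : 1 < b) (hx : 0 < x) (hz : 0 < z)
    (h : x * z ≤ y) : logb b x ≤ logb b y - logb b z := by
  have := logb_le_logb_of_le hb (mul_pos hx hz) h
  rw [logb_mul hx.ne' hz.ne'] at this
  linarith

theorem induction_step_estimate_general (c k k₁ k₂ l l₀ l₁ l₂ : ℝ) (hc : 0 < c)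
    (hk₁ : 0 ≤ k₁) (hk₂ : 0 ≤ k₂) (hk : k₁ + k₂ ≤ k)
    (hl₁ : 1 ≤ l₁) (hl₁' : l₁ ≤ 2 * l / 3)
    (hl₂ : 1 ≤ l₂) (hl₂' : l₂ ≤ 2 * l / 3)
    (hl₀' : l₀ ≤ c * Real.sqrt k)
    (hl : 2 ≤ l) (hlk : l ≤ 2 * k) :
    4 * c * k₁ ^ ((3 : ℝ) / 2) * Real.logb 2 l₁ +
      4 * c * k₂ ^ ((3 : ℝ) / 2) * Real.logb 2 l₂ + l₀ * l ≤
      4 * c * k ^ ((3 : ℝ) / 2) * Real.logb 2 l := by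
  set p : ℝ := 3 / 2
  set D := logb 2 (3 / 2)
  have hlog₁ : logb 2 l₁ ≤ logb 2 l - D :=
    logb_le_logb_sub_logb_of_mul_le one_lt_two (by linarith) (by norm_num) (by linarith)
  have hlog₂ : logb 2 l₂ ≤ logb 2 l - D :=
    logb_le_logb_sub_logb_of_mul_le one_lt_two (by linarith) (by norm_num) (by linarith)
  have hLD : 0 ≤ logb 2 l - D := (logb_nonneg one_lt_two hl₁).trans hlog₁
  have hpow : k₁ ^ p + k₂ ^ p ≤ k ^ p := rpow_add_rpow_le_of_add_le hk₁ hk₂ hk (by norm_num)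
  have hl₀l : l₀ * l ≤ 2 * c * k ^ p :=
    mul_le_two_mul_rpow_three_halves hc.le (by linarith) hl₀' hlk
  have hD : 2 * c * k ^ p ≤ 4 * c * k ^ p * D := by
    have hK : 0 ≤ 4 * c * k ^ p := by
      have := rpow_nonneg (by linarith : (0 : ℝ) ≤ k) p
      positivity
    linarith [mul_le_mul_of_nonneg_left half_le_logb_two_three_halves hK]
  calc _ ≤ 4 * c * k₁ ^ p * (logb 2 l - D) + 4 * c * k₂ ^ p * (logb 2 l - D) + 2 * c * k ^ p := by
        gcongr
    _ = 4 * c * (k₁ ^ p + k₂ ^ p) * (logb 2 l - D) + 2 * c * k ^ p := by ring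
    _ ≤ 4 * c * k ^ p * (logb 2 l - D) + 4 * c * k ^ p * D := by gcongr
    _ = 4 * c * k ^ p * logb 2 l := by ring

/-- The key numerical estimate in the induction: with `c > 0`, `k₁, k₂ ≥ 0`,
`k₁ + k₂ ≤ k`, `1 ≤ l₁ ≤ 2l/3`, `1 ≤ l₂ ≤ 2l/3`, `0 ≤ l₀ ≤ c√k`, `l ≥ 2` and
`l ≤ 2k`, we get
`4c·k₁^(3/2)·log₂ l₁ + 4c·k₂^(3/2)·log₂ l₂ + l₀·l ≤ 4c·k^(3/2)·log₂ l`. -/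
theorem induction_step_estimate (c k k₁ k₂ l l₀ l₁ l₂ : ℝ) (hc : 0 < c)
    (hk₁ : 0 ≤ k₁) (hk₂ : 0 ≤ k₂) (hk : k₁ + k₂ ≤ k)
    (hl₁ : 1 ≤ l₁) (hl₁' : l₁ ≤ 2 * l / 3)
    (hl₂ : 1 ≤ l₂) (hl₂' : l₂ ≤ 2 * l / 3)
    (hl₀ : 0 ≤ l₀) (hl₀' : l₀ ≤ c * Real.sqrt k)
    (hl : 2 ≤ l) (hlk : l ≤ 2 * k) :
    4 * c * k₁ ^ ((3 : ℝ) / 2) * Real.logb 2 l₁ +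
      4 * c * k₂ ^ ((3 : ℝ) / 2) * Real.logb 2 l₂ + l₀ * l ≤
      4 * c * k ^ ((3 : ℝ) / 2) * Real.logb 2 l :=
  induction_step_estimate_general c k k₁ k₂ l l₀ l₁ l₂ hc hk₁ hk₂ hk hl₁ hl₁' hl₂ hl₂' hl₀' hl hlk
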